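/- Data processing inequality for Lipschitz-regularized f-divergences under Markov kernels: let K be a Markov (probability) kernel from ℝ^d to ℝ^m such that ∫ ‖y‖ K(x, dy) < ∞ for every x ∈ ℝ^d, and let P, Q ∈ P_1(ℝ^d) be such that the pushforwards K_#P, K_#Q (defined by K_#P(A) = ∫ K(x, A) dP(x)) lie in P_1(ℝ^m). For φ : ℝ^m → ℝ bounded below by an affine function of ‖y‖, write Kφ(x) = ∫ φ(y) K(x, dy). Then for every L > 0: sup_{φ ∈ Γ_L(ℝ^m)} { ∫ φ d(K_#P) − inf_{ν ∈ ℝ} ( ν + ∫ f*(φ − ν) d(K_#Q) ) } ≤ sup_{φ ∈ Γ_L(ℝ^m)} { ∫ Kφ dP − inf_{ν ∈ ℝ} ( ν + ∫ f*(Kφ − ν) dQ ) }; that is, D_f^{Γ_L}(K_#P ‖ K_#Q) ≤ D_f^{K(Γ_L)}(P ‖ Q). -/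

import Mathlib

open MeasureTheory Filter Set Topology
open scoped Classical

noncomputable section

/-- `ℝ^d` with the Euclidean norm. -/
abbrev Euc (d : ℕ) := EuclideanSpace ℝ (Fin d)

/-- Legendre transform `f*(y) = sup_{t ≥ 0} (t·y − f(t))` of `f : [0,∞) → ℝ`. -/
def legendre (f : ℝ → ℝ) (y : ℝ) : ℝ :=
  sSup ((fun t => t * y - f t) '' Ici (0 : ℝ))

/-- `Γ_L`: the set of `L`-Lipschitz real-valued functions on `E`. -/
def GammaL (E : Type*) [NormedAddCommGroup E] (L : ℝ) : Set (E → ℝ) :=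
  {φ | ∀ x y : E, |φ x - φ y| ≤ L * ‖x - y‖}

/-- The objective `∫ φ dP − inf_ν ( ν + ∫ f*(φ − ν) dQ )`. -/
def dualObj (f : ℝ → ℝ) {E : Type*} [NormedAddCommGroup E] [MeasurableSpace E]
    (φ : E → ℝ) (P Q : Measure E) : ℝ :=
  (∫ x, φ x ∂P) - sInf (Set.range fun ν : ℝ => ν + ∫ x, legendre f (φ x - ν) ∂Q)

/-- The Lipschitz-regularized `f`-divergence `D_f^{Γ_L}(P‖Q)`. -/
def Dreg (f : ℝ → ℝ) {E : Type*} [NormedAddCommGroup E] [MeasurableSpace E]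
    (L : ℝ) (P Q : Measure E) : ℝ :=
  sSup ((fun φ => dualObj f φ P Q) '' GammaL E L)

/-- The 1-Wasserstein metric `W^{Γ_1}(P,Q)` in dual form. -/
def W1 {E : Type*} [NormedAddCommGroup E] [MeasurableSpace E] (P Q : Measure E) : ℝ :=
  sSup ((fun φ => (∫ x, φ x ∂P) - ∫ x, φ x ∂Q) '' GammaL E 1)

/-- Membership in `P_1`: Borel probability measure with finite first moment. -/
def memP1 {E : Type*} [NormedAddCommGroup E] [MeasurableSpace E] (P : Measure E) : Prop :=
  IsProbabilityMeasure P ∧ Integrable (fun x => ‖x‖) P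

/-- Support of a measure: points all of whose open neighborhoods have positive measure. -/
def msupport {E : Type*} [TopologicalSpace E] [MeasurableSpace E] (μ : Measure E) : Set E :=
  {x | ∀ U : Set E, IsOpen U → x ∈ U → 0 < μ U}

/-- The `f`-divergence `D_f(P‖Q) ∈ [0,∞]`, i.e. `∫ f(dP/dQ) dQ` if `P ≪ Q`
(and the integral is well defined), `+∞` otherwise. -/
def DfE (f : ℝ → ℝ) {E : Type*} [MeasurableSpace E] (P Q : Measure E) : EReal :=
  if P ≪ Q ∧ Integrable (fun x => f ((P.rnDeriv Q x).toReal)) Q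
  then ((∫ x, f ((P.rnDeriv Q x).toReal) ∂Q : ℝ) : EReal)
  else ⊤

/-! ### Auxiliary lemmas on the Legendre transform -/

section LegendreFacts

variable {f : ℝ → ℝ}

lemma legendre_set_nonempty (f : ℝ → ℝ) (y : ℝ) :
    ((fun t => t * y - f t) '' Ici (0 : ℝ)).Nonempty :=
  ⟨0 * y - f 0, mem_image_of_mem _ self_mem_Ici⟩

lemma convex_affine_lower_bound (hconv : ConvexOn ℝ (Ici (0:ℝ)) f) :
    ∃ C : ℝ, 0 ≤ C ∧ ∀ t : ℝ, 0 ≤ t → f 1 - C * (t + 1) ≤ f t := by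
  set m : ℝ := (f (1/2) - f 1) / ((1/2) - 1) with hm
  set M : ℝ := (f 2 - f 1) / (2 - 1) with hM
  refine ⟨max |m| |M|, le_trans (abs_nonneg m) (le_max_left _ _), fun t ht => ?_⟩
  have h1 : (1:ℝ) ∈ Ici (0:ℝ) := by norm_num
  have hhalf : (1/2:ℝ) ∈ Ici (0:ℝ) := by norm_num
  have h2 : (2:ℝ) ∈ Ici (0:ℝ) := by norm_num
  have htm : t ∈ Ici (0:ℝ) := ht
  have hC0' : (0:ℝ) ≤ max |m| |M| := le_trans (abs_nonneg m) (le_max_left _ _)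
  rcases le_or_gt t 1 with hle | hgt
  · rcases eq_or_lt_of_le hle with rfl | hlt
    · linarith
    · -- slope(1,t) ≤ slope(1,2) = M
      have hsec := hconv.secant_mono h1 htm h2 (ne_of_lt hlt) (by norm_num) (by linarith)
      rw [← hM] at hsec
      have hMle : M ≤ max |m| |M| := le_trans (le_abs_self M) (le_max_right _ _)
      have hden : t - 1 < 0 := by linarith
      have h3 : M * (t - 1) ≤ f t - f 1 := by
        have := (div_le_iff_of_neg hden).mp hsec
        linarith
      have e1 : M * (1 - t) ≤ (max |m| |M|) * (1 - t) :=
        mul_le_mul_of_nonneg_right hMle (by linarith)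
      have e2 : 0 ≤ (max |m| |M|) * t := mul_nonneg hC0' ht
      nlinarith
  · -- slope(1,1/2) = m ≤ slope(1,t)
    have hsec := hconv.secant_mono h1 hhalf htm (by norm_num) (ne_of_gt hgt) (by linarith)
    rw [← hm] at hsec
    have hm' : -(max |m| |M|) ≤ m := by
      have h5 : -|m| ≤ m := neg_abs_le m
      have h4 : |m| ≤ max |m| |M| := le_max_left _ _
      linarith
    have hden : 0 < t - 1 := by linarith
    have h3 : m * (t - 1) ≤ f t - f 1 := by
      have := (le_div_iff₀ hden).mp hsec
      linarith
    have e1 : -(max |m| |M|) * (t - 1) ≤ m * (t - 1) :=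
      mul_le_mul_of_nonneg_right hm' (by linarith)
    nlinarith

lemma legendre_bddAbove (hconv : ConvexOn ℝ (Ici (0:ℝ)) f)
    (hsl : Tendsto (fun s => f s / s) atTop atTop) (y : ℝ) :
    BddAbove ((fun t => t * y - f t) '' Ici (0 : ℝ)) := by
  obtain ⟨C, hC0, hC⟩ := convex_affine_lower_bound hconv
  obtain ⟨S0, hS0⟩ := (hsl.eventually_ge_atTop (|y| + 1)).exists_forall_of_atTop
  set S1 : ℝ := max S0 1 with hS1
  refine ⟨max 0 (S1 * |y| + (C * (S1 + 1) - f 1)), ?_⟩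
  rintro z ⟨t, ht, rfl⟩
  simp only [mem_Ici] at ht
  rcases le_or_gt t S1 with hle | hgt
  · have h1 : t * y ≤ S1 * |y| := by
      calc t * y ≤ t * |y| := by nlinarith [le_abs_self y]
      _ ≤ S1 * |y| := by nlinarith [abs_nonneg y]
    have h2 : f 1 - C * (t + 1) ≤ f t := hC t ht
    have h3 : C * (t+1) ≤ C * (S1 + 1) := by nlinarith
    have : t * y - f t ≤ S1 * |y| + (C * (S1 + 1) - f 1) := by linarith
    exact le_trans this (le_max_right _ _)
  · have hS1t : S0 ≤ t := le_trans (le_max_left _ _) hgt.le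
    have ht1 : (1:ℝ) ≤ t := le_trans (le_max_right _ _) hgt.le
    have hft : |y| + 1 ≤ f t / t := hS0 t hS1t
    have htpos : 0 < t := by linarith
    have : (|y| + 1) * t ≤ f t := by
      have := (le_div_iff₀ htpos).mp hft
      linarith
    have : t * y - f t ≤ 0 := by nlinarith [le_abs_self y]
    exact le_trans this (le_max_left _ _)

lemma le_legendre {y : ℝ} (hbdd : BddAbove ((fun t => t * y - f t) '' Ici (0 : ℝ)))
    {t : ℝ} (ht : 0 ≤ t) : t * y - f t ≤ legendre f y :=
  le_csSup hbdd ⟨t, ht, rfl⟩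

lemma legendre_le {y M : ℝ} (h : ∀ t : ℝ, 0 ≤ t → t * y - f t ≤ M) :
    legendre f y ≤ M := by
  refine csSup_le (legendre_set_nonempty f y) ?_
  rintro z ⟨t, ht, rfl⟩
  exact h t ht

lemma id_le_legendre (hbdd : ∀ y : ℝ, BddAbove ((fun t => t * y - f t) '' Ici (0 : ℝ)))
    (hf1 : f 1 = 0) (y : ℝ) : y ≤ legendre f y := by
  have := le_legendre (f := f) (hbdd y) (zero_le_one)
  simpa [hf1] using this

lemma legendre_mono (hbdd : ∀ y : ℝ, BddAbove ((fun t => t * y - f t) '' Ici (0 : ℝ))) :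
    Monotone (legendre f) := by
  intro y y' h
  refine legendre_le fun t ht => ?_
  have h1 : t * y - f t ≤ t * y' - f t := by nlinarith
  exact le_trans h1 (le_legendre (hbdd y') ht)

lemma legendre_convexOn (hbdd : ∀ y : ℝ, BddAbove ((fun t => t * y - f t) '' Ici (0 : ℝ))) :
    ConvexOn ℝ univ (legendre f) := by
  refine ⟨convex_univ, fun x _ y _ a b ha hb hab => ?_⟩
  refine legendre_le fun t ht => ?_
  have h1 : a * (t * x - f t) ≤ a * legendre f x :=
    mul_le_mul_of_nonneg_left (le_legendre (hbdd x) ht) ha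
  have h2 : b * (t * y - f t) ≤ b * legendre f y :=
    mul_le_mul_of_nonneg_left (le_legendre (hbdd y) ht) hb
  have h3 : t * (a • x + b • y) - f t = a * (t * x - f t) + b * (t * y - f t) := by
    simp only [smul_eq_mul]; linear_combination (f t) * hab
  rw [h3]
  simpa using add_le_add h1 h2

lemma legendre_continuous (hbdd : ∀ y : ℝ, BddAbove ((fun t => t * y - f t) '' Ici (0 : ℝ))) :
    Continuous (legendre f) := by
  rw [← continuousOn_univ]
  exact (legendre_convexOn hbdd).continuousOn isOpen_univ

lemma legendre_inf_zero (hbdd : ∀ y : ℝ, BddAbove ((fun t => t * y - f t) '' Ici (0 : ℝ)))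
    (hconv : ConvexOn ℝ (Ici (0:ℝ)) f) (hf1 : f 1 = 0) :
    sInf (Set.range fun ν : ℝ => ν + legendre f (-ν)) = 0 := by
  have hge : ∀ z ∈ Set.range fun ν : ℝ => ν + legendre f (-ν), (0:ℝ) ≤ z := by
    rintro z ⟨ν, rfl⟩
    have := id_le_legendre hbdd hf1 (-ν)
    show (0:ℝ) ≤ ν + legendre f (-ν)
    linarith
  have hbb : BddBelow (Set.range fun ν : ℝ => ν + legendre f (-ν)) :=
    ⟨0, fun z hz => hge z hz⟩
  refine le_antisymm ?_ (le_csInf (Set.range_nonempty _) hge)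
  refine le_of_forall_pos_le_add fun ε hε => ?_
  set m : ℝ := (f (1/2) - f 1) / ((1/2) - 1) with hmdef
  set M : ℝ := (f 2 - f 1) / (2 - 1) with hMdef
  have hmM : m ≤ M := by
    have := hconv.secant_mono (by norm_num : (1:ℝ) ∈ Ici (0:ℝ))
      (by norm_num : (1/2:ℝ) ∈ Ici (0:ℝ)) (by norm_num : (2:ℝ) ∈ Ici (0:ℝ))
      (by norm_num) (by norm_num) (by norm_num)
    simpa [hmdef, hMdef] using this
  set δ : ℝ := min 1 (ε / (M - m + 1)) with hδdef
  have hMm1 : 0 < M - m + 1 := by linarith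
  have hδpos : 0 < δ := lt_min one_pos (div_pos hε hMm1)
  have hδ1 : δ ≤ 1 := min_le_left _ _
  have hδε : δ * (M - m) ≤ ε := by
    have h1 : δ ≤ ε / (M - m + 1) := min_le_right _ _
    have h2 : δ * (M - m + 1) ≤ ε := by
      rw [← le_div_iff₀ hMm1]; exact h1
    nlinarith
  set y : ℝ := (f (1 + δ) - f 1) / δ with hydef
  have h1mem : (1:ℝ) ∈ Ici (0:ℝ) := by norm_num
  have h1δmem : (1 + δ) ∈ Ici (0:ℝ) := by simp only [mem_Ici]; linarith
  have hym : m ≤ y := by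
    have := hconv.secant_mono h1mem (by norm_num : (1/2:ℝ) ∈ Ici (0:ℝ)) h1δmem
      (by norm_num) (by linarith) (by linarith)
    rw [hydef, hmdef]
    have e : (1:ℝ) + δ - 1 = δ := by ring
    rw [e] at this; exact this
  have hyM : y ≤ M := by
    have := hconv.secant_mono h1mem h1δmem (by norm_num : (2:ℝ) ∈ Ici (0:ℝ))
      (by linarith) (by norm_num) (by linarith)
    rw [hydef, hMdef]
    have e : (1:ℝ) + δ - 1 = δ := by ring
    rw [e] at this; exact this
  have hkey : legendre f y ≤ y + ε := by
    refine legendre_le fun t ht => ?_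
    rcases le_or_gt t 1 with hle | hgt
    · rcases eq_or_lt_of_le hle with rfl | hlt
      · simp [hf1]; linarith
      · have hsec := hconv.secant_mono h1mem (mem_Ici.mpr ht) h1δmem
          (ne_of_lt hlt) (by linarith) (by linarith)
        have hy' : (f t - f 1) / (t - 1) ≤ y := by
          rw [hydef]
          have e : (1:ℝ) + δ - 1 = δ := by ring
          rw [e] at hsec; exact hsec
        have hden : t - 1 < 0 := by linarith
        have h3 : y * (t - 1) ≤ f t - f 1 := by
          have := (div_le_iff_of_neg hden).mp hy'
          linarith
        nlinarith
    · rcases le_or_gt (1 + δ) t with hge | hmid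
      · rcases eq_or_lt_of_le hge with heq | hgt2
        · have hyt : y * δ = f (1 + δ) - f 1 := by
            rw [hydef]; field_simp
          rw [← heq]
          nlinarith [hyt]
        · have hsec := hconv.secant_mono h1mem h1δmem (mem_Ici.mpr ht)
            (by linarith) (by linarith) (by linarith)
          have hy' : y ≤ (f t - f 1) / (t - 1) := by
            rw [hydef]
            have e : (1:ℝ) + δ - 1 = δ := by ring
            rw [e] at hsec; exact hsec
          have hden : 0 < t - 1 := by linarith
          have h3 : y * (t - 1) ≤ f t - f 1 := by
            have := (le_div_iff₀ hden).mp hy'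
            linarith
          nlinarith
      · have hsec := hconv.secant_mono h1mem (by norm_num : (1/2:ℝ) ∈ Ici (0:ℝ))
          (mem_Ici.mpr ht) (by norm_num) (by linarith) (by linarith)
        have hm' : m ≤ (f t - f 1) / (t - 1) := by
          rw [hmdef]; exact hsec
        have hden : 0 < t - 1 := by linarith
        have h3 : m * (t - 1) ≤ f t - f 1 := by
          have := (le_div_iff₀ hden).mp hm'
          linarith
        have h4 : (t - 1) * (y - m) ≤ δ * (M - m) :=
          mul_le_mul (by linarith) (by linarith) (by linarith) (by linarith)
        nlinarith
  have hfin : -y + legendre f (-(-y)) ≤ 0 + ε := by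
    simp only [neg_neg]; linarith
  exact le_trans (csInf_le hbb ⟨-y, rfl⟩) hfin

end LegendreFacts

/-! ### Auxiliary lemmas on integration against `Measure.bind` -/

section BindFacts

open ProbabilityTheory

variable {α β : Type*} [MeasurableSpace α] [MeasurableSpace β]
  (μ : Measure α) [SFinite μ] (K : Kernel α β) [IsSFiniteKernel K]

lemma bind_eq_snd : μ.bind (fun x => K x) = (μ ⊗ₘ K).snd := by
  ext s hs
  rw [Measure.bind_apply hs K.measurable.aemeasurable, Measure.snd_apply hs,
    Measure.compProd_apply (measurable_snd hs)]
  rfl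

variable {μ K}

lemma integrable_bind_iff {g : β → ℝ} (hg : Measurable g) :
    Integrable g (μ.bind (fun x => K x)) ↔
      Integrable (fun p : α × β => g p.2) (μ ⊗ₘ K) := by
  rw [bind_eq_snd μ K, Measure.snd,
    integrable_map_measure hg.aestronglyMeasurable measurable_snd.aemeasurable]
  rfl

lemma integral_bind_eq {g : β → ℝ} (hg : Measurable g)
    (hgi : Integrable g (μ.bind fun x => K x)) :
    ∫ y, g y ∂(μ.bind fun x => K x) = ∫ x, ∫ y, g y ∂(K x) ∂μ := by
  have h2 : Integrable (fun p : α × β => g p.2) (μ ⊗ₘ K) :=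
    (integrable_bind_iff hg).mp hgi
  rw [bind_eq_snd μ K, Measure.snd,
    integral_map measurable_snd.aemeasurable hg.aestronglyMeasurable,
    Measure.integral_compProd h2]

lemma bind_ae_integrable {g : β → ℝ} (hg : Measurable g)
    (hgi : Integrable g (μ.bind fun x => K x)) :
    ∀ᵐ x ∂μ, Integrable g (K x) :=
  ((Measure.integrable_compProd_iff
    (hg.comp measurable_snd).aestronglyMeasurable).mp
    ((integrable_bind_iff hg).mp hgi)).1

lemma bind_integral_norm_integrable {g : β → ℝ} (hg : Measurable g)
    (hgi : Integrable g (μ.bind fun x => K x)) :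
    Integrable (fun x => ∫ y, ‖g y‖ ∂(K x)) μ :=
  ((Measure.integrable_compProd_iff
    (hg.comp measurable_snd).aestronglyMeasurable).mp
    ((integrable_bind_iff hg).mp hgi)).2

lemma kernel_integral_stronglyMeasurable {g : β → ℝ} (hg : StronglyMeasurable g) :
    StronglyMeasurable (fun x => ∫ y, g y ∂(K x)) :=
  (hg.comp_measurable measurable_snd).integral_kernel_prod_right'

lemma bind_integral_integrable {g : β → ℝ} (hg : Measurable g)
    (hgi : Integrable g (μ.bind fun x => K x)) :
    Integrable (fun x => ∫ y, g y ∂(K x)) μ := by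
  refine Integrable.mono' (bind_integral_norm_integrable hg hgi)
    (kernel_integral_stronglyMeasurable hg.stronglyMeasurable).aestronglyMeasurable
    (ae_of_all _ fun x => ?_)
  exact norm_integral_le_integral_norm _

end BindFacts

/-! ### Auxiliary lemmas on Lipschitz functions -/

section GammaFacts

lemma gammaL_continuous {E : Type*} [NormedAddCommGroup E] {L : ℝ} (hL : 0 ≤ L)
    {φ : E → ℝ} (hφ : φ ∈ GammaL E L) : Continuous φ := by
  have : LipschitzWith L.toNNReal φ := by
    refine LipschitzWith.of_dist_le_mul fun x y => ?_
    rw [Real.coe_toNNReal _ hL, Real.dist_eq, dist_eq_norm]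
    exact hφ x y
  exact this.continuous

lemma gammaL_le_affine {E : Type*} [NormedAddCommGroup E] {L : ℝ}
    {φ : E → ℝ} (hφ : φ ∈ GammaL E L) (y : E) :
    |φ y| ≤ |φ 0| + L * ‖y‖ := by
  have h := hφ y 0
  rw [sub_zero] at h
  calc |φ y| = |(φ y - φ 0) + φ 0| := by ring_nf
  _ ≤ |φ y - φ 0| + |φ 0| := abs_add_le _ _
  _ ≤ |φ 0| + L * ‖y‖ := by linarith

lemma gammaL_integrable {E : Type*} [NormedAddCommGroup E] [MeasurableSpace E]
    [OpensMeasurableSpace E] {L : ℝ} (hL : 0 ≤ L)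
    {φ : E → ℝ} (hφ : φ ∈ GammaL E L) (μ : Measure E) [IsFiniteMeasure μ]
    (hμ : Integrable (fun x => ‖x‖) μ) : Integrable φ μ := by
  refine Integrable.mono' ((integrable_const (|φ 0|)).add (hμ.const_mul L))
    (gammaL_continuous hL hφ).aestronglyMeasurable (ae_of_all _ fun y => ?_)
  rw [Real.norm_eq_abs]
  exact gammaL_le_affine hφ y

lemma integrable_sandwich {γ : Type*} [MeasurableSpace γ] {μ : Measure γ} {g a b : γ → ℝ}
    (hm : AEStronglyMeasurable g μ) (h1 : ∀ᵐ x ∂μ, a x ≤ g x) (h2 : ∀ᵐ x ∂μ, g x ≤ b x)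
    (ha : Integrable a μ) (hb : Integrable b μ) : Integrable g μ := by
  refine Integrable.mono' (ha.abs.add hb.abs) hm ?_
  filter_upwards [h1, h2] with x hx1 hx2
  simp only [Pi.add_apply]
  rw [Real.norm_eq_abs, abs_le]
  constructor
  · linarith [neg_abs_le (a x), abs_nonneg (b x)]
  · linarith [le_abs_self (b x), abs_nonneg (a x)]

end GammaFacts

open ProbabilityTheory in
theorem Dreg_data_processing_kernel
    {d m : ℕ} (hd : 1 ≤ d) (hm : 1 ≤ m)
    (f : ℝ → ℝ) (hconv : StrictConvexOn ℝ (Ici (0:ℝ)) f)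
    (hlsc : LowerSemicontinuousOn f (Ici (0:ℝ)))
    (hsl : Tendsto (fun s => f s / s) atTop atTop)
    (hf1 : f 1 = 0)
    (K : Kernel (Euc d) (Euc m)) (hK : IsMarkovKernel K)
    (hKmom : ∀ x : Euc d, Integrable (fun y => ‖y‖) (K x))
    (P Q : Measure (Euc d)) (hP : memP1 P) (hQ : memP1 Q)
    (hKP : memP1 (P.bind (fun x => K x))) (hKQ : memP1 (Q.bind (fun x => K x)))
    (L : ℝ) (hL : 0 < L) :
    Dreg f L (P.bind (fun x => K x)) (Q.bind (fun x => K x)) ≤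
      sSup ((fun φ : Euc m → ℝ =>
        dualObj f (fun x : Euc d => ∫ y, φ y ∂(K x)) P Q) '' GammaL (Euc m) L) := by
  classical
  obtain ⟨hPp, hPm⟩ := hP
  obtain ⟨hQp, hQm⟩ := hQ
  obtain ⟨hKPp, hKPm⟩ := hKP
  obtain ⟨hKQp, hKQm⟩ := hKQ
  haveI := hPp; haveI := hQp; haveI := hKPp; haveI := hKQp; haveI := hK
  set PK := P.bind (fun x => K x) with hPKdef
  set QK := Q.bind (fun x => K x) with hQKdef
  have hconv' : ConvexOn ℝ (Ici (0:ℝ)) f := hconv.convexOn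
  have hbdd : ∀ y : ℝ, BddAbove ((fun t => t * y - f t) '' Ici (0 : ℝ)) :=
    legendre_bddAbove hconv' hsl
  have hcont : Continuous (legendre f) := legendre_continuous hbdd
  have hidle : ∀ y, y ≤ legendre f y := id_le_legendre hbdd hf1
  have hmono : Monotone (legendre f) := legendre_mono hbdd
  set T := ((fun φ : Euc m → ℝ =>
      dualObj f (fun x : Euc d => ∫ y, φ y ∂(K x)) P Q) '' GammaL (Euc m) L) with hTdef
  -- the zero test function gives the value 0 on the right-hand side
  have hzeroGamma : (fun _ : Euc m => (0:ℝ)) ∈ GammaL (Euc m) L := by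
    intro x y
    simp only [sub_self, abs_zero]
    positivity
  have hT0 : dualObj f (fun x : Euc d => ∫ y, (fun _ : Euc m => (0:ℝ)) y ∂K x) P Q = 0 := by
    have h1 : (fun x : Euc d => ∫ y, (fun _ : Euc m => (0:ℝ)) y ∂K x) = fun _ => (0:ℝ) := by
      funext x; simp
    rw [h1, dualObj]
    simp only [integral_zero, integral_const, probReal_univ, one_smul,
      zero_sub]
    rw [legendre_inf_zero hbdd hconv' hf1]
    simp
  have h0T : (0:ℝ) ∈ T := ⟨(fun _ : Euc m => (0:ℝ)), hzeroGamma, hT0⟩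
  have hT0le : 0 ≤ sSup T := by
    by_cases hb : BddAbove T
    · exact le_csSup hb h0T
    · rw [Real.sSup_of_not_bddAbove hb]
  by_cases HI : ∀ φ ∈ GammaL (Euc m) L, ∀ ν : ℝ,
      Integrable (fun y : Euc m => legendre f (φ y - ν)) QK
  · -- the integrable case
    -- basic facts for every φ ∈ Γ_L
    have hKint : ∀ φ : Euc m → ℝ, φ ∈ GammaL (Euc m) L →
        Integrable (fun x => ∫ y, φ y ∂K x) P ∧
        Integrable (fun x => ∫ y, φ y ∂K x) Q ∧
        (∫ x, φ x ∂PK = ∫ x, ∫ y, φ y ∂K x ∂P) ∧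
        (∫ x, φ x ∂QK = ∫ x, ∫ y, φ y ∂K x ∂Q) := by
      intro φ hφ
      have hφm : Measurable φ := (gammaL_continuous hL.le hφ).measurable
      have hφPK : Integrable φ PK := gammaL_integrable hL.le hφ PK hKPm
      have hφQK : Integrable φ QK := gammaL_integrable hL.le hφ QK hKQm
      exact ⟨bind_integral_integrable hφm hφPK, bind_integral_integrable hφm hφQK,
        integral_bind_eq hφm hφPK, integral_bind_eq hφm hφQK⟩
    -- the key Jensen estimate
    have key : ∀ φ : Euc m → ℝ, φ ∈ GammaL (Euc m) L → ∀ ν : ℝ,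
        Integrable (fun x => legendre f ((∫ y, φ y ∂K x) - ν)) Q ∧
        ∫ x, legendre f ((∫ y, φ y ∂K x) - ν) ∂Q ≤ ∫ y, legendre f (φ y - ν) ∂QK := by
      intro φ hφ ν
      have hφc : Continuous φ := gammaL_continuous hL.le hφ
      have hφm : Measurable φ := hφc.measurable
      obtain ⟨hKφP, hKφQ, hPKeq, hQKeq⟩ := hKint φ hφ
      set g : Euc m → ℝ := fun y => legendre f (φ y - ν) with hgdef
      have hgm : Measurable g := (hcont.comp (hφc.sub continuous_const)).measurable
      have hgQK : Integrable g QK := HI φ hφ ν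
      have hae : ∀ᵐ x ∂Q, Integrable g (K x) := bind_ae_integrable hgm hgQK
      have hH : Integrable (fun x => ∫ y, g y ∂K x) Q := bind_integral_integrable hgm hgQK
      have heq : ∫ y, g y ∂QK = ∫ x, ∫ y, g y ∂K x ∂Q := integral_bind_eq hgm hgQK
      have hJ : ∀ᵐ x ∂Q, legendre f ((∫ y, φ y ∂K x) - ν) ≤ ∫ y, g y ∂K x := by
        filter_upwards [hae] with x hx
        haveI : IsProbabilityMeasure (K x) := hK.isProbabilityMeasure x
        have hφKx : Integrable φ (K x) := gammaL_integrable hL.le hφ (K x) (hKmom x)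
        have hsub : Integrable (fun y => φ y - ν) (K x) := hφKx.sub (integrable_const ν)
        have hjen := (legendre_convexOn hbdd).map_integral_le hcont.continuousOn
          isClosed_univ (ae_of_all _ fun y => mem_univ _) hsub hx
        rwa [integral_sub hφKx (integrable_const ν), integral_const, probReal_univ,
          one_smul] at hjen
      have hmeasLHS : AEStronglyMeasurable
          (fun x => legendre f ((∫ y, φ y ∂K x) - ν)) Q :=
        (hcont.measurable.comp
          (((kernel_integral_stronglyMeasurable hφc.stronglyMeasurable).measurable).sub
            measurable_const)).aestronglyMeasurable
      have hLHSint : Integrable (fun x => legendre f ((∫ y, φ y ∂K x) - ν)) Q := by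
        refine integrable_sandwich hmeasLHS
          (ae_of_all _ fun x => hidle ((∫ y, φ y ∂K x) - ν)) hJ
          (hKφQ.sub (integrable_const ν)) hH
      refine ⟨hLHSint, ?_⟩
      calc ∫ x, legendre f ((∫ y, φ y ∂K x) - ν) ∂Q
          ≤ ∫ x, ∫ y, g y ∂K x ∂Q := integral_mono_ae hLHSint hH hJ
        _ = ∫ y, g y ∂QK := heq.symm
    -- lower bound for the inner infimum on the right-hand side
    have hBlow : ∀ φ : Euc m → ℝ, φ ∈ GammaL (Euc m) L → ∀ ν : ℝ,
        (∫ x, ∫ y, φ y ∂K x ∂Q) ≤ ν + ∫ x, legendre f ((∫ y, φ y ∂K x) - ν) ∂Q := by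
      intro φ hφ ν
      obtain ⟨hKφP, hKφQ, hPKeq, hQKeq⟩ := hKint φ hφ
      have h1 : ∫ x, ((∫ y, φ y ∂K x) - ν) ∂Q ≤ ∫ x, legendre f ((∫ y, φ y ∂K x) - ν) ∂Q :=
        integral_mono (hKφQ.sub (integrable_const ν)) ((key φ hφ ν).1)
          (fun x => hidle _)
      rw [integral_sub hKφQ (integrable_const ν), integral_const, probReal_univ,
        one_smul] at h1
      linarith
    -- T is bounded above
    set CW : ℝ := L * (∫ x, ‖x‖ ∂PK) + L * (∫ x, ‖x‖ ∂QK) with hCWdef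
    have hTbound : ∀ z ∈ T, z ≤ CW := by
      rintro z ⟨ψ, hψ, rfl⟩
      obtain ⟨hKψP, hKψQ, hPKeq, hQKeq⟩ := hKint ψ hψ
      have hψPK : Integrable ψ PK := gammaL_integrable hL.le hψ PK hKPm
      have hψQK : Integrable ψ QK := gammaL_integrable hL.le hψ QK hKQm
      have hup : ∫ x, ψ x ∂PK ≤ ψ 0 + L * ∫ x, ‖x‖ ∂PK := by
        have h1 : ∫ x, ψ x ∂PK ≤ ∫ x, (ψ 0 + L * ‖x‖) ∂PK := by
          refine integral_mono hψPK ((integrable_const (ψ 0)).add (hKPm.const_mul L))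
            (fun x => ?_)
          have := hψ x 0
          rw [sub_zero] at this
          have h2 := abs_le.mp this
          linarith [h2.2]
        rwa [integral_add (integrable_const (ψ 0)) (hKPm.const_mul L), integral_const,
          probReal_univ, one_smul, integral_const_mul] at h1
      have hlow : ψ 0 - L * ∫ x, ‖x‖ ∂QK ≤ ∫ x, ψ x ∂QK := by
        have h1 : ∫ x, (ψ 0 - L * ‖x‖) ∂QK ≤ ∫ x, ψ x ∂QK := by
          refine integral_mono ((integrable_const (ψ 0)).sub (hKQm.const_mul L)) hψQK
            (fun x => ?_)
          have := hψ x 0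
          rw [sub_zero] at this
          have h2 := abs_le.mp this
          linarith [h2.1]
        rwa [integral_sub (integrable_const (ψ 0)) (hKQm.const_mul L), integral_const,
          probReal_univ, one_smul, integral_const_mul] at h1
      have hInf : (∫ x, ∫ y, ψ y ∂K x ∂Q) ≤
          sInf (Set.range fun ν : ℝ => ν + ∫ x, legendre f ((∫ y, ψ y ∂K x) - ν) ∂Q) := by
        refine le_csInf (Set.range_nonempty _) ?_
        rintro z ⟨ν, rfl⟩
        exact hBlow ψ hψ ν
      show dualObj f (fun x => ∫ y, ψ y ∂K x) P Q ≤ CW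
      rw [dualObj]
      have := hInf
      rw [← hQKeq] at this
      rw [← hPKeq]
      have hfinal : ∫ x, ψ x ∂PK - ∫ x, ψ x ∂QK ≤ CW := by
        rw [hCWdef]; linarith
      linarith [this, hfinal]
    have hbddT : BddAbove T := ⟨CW, fun z hz => hTbound z hz⟩
    -- sSup S ≤ sSup T
    rw [Dreg]
    refine Real.sSup_le ?_ hT0le
    rintro s ⟨φ, hφ, rfl⟩
    show dualObj f φ PK QK ≤ sSup T
    obtain ⟨hKφP, hKφQ, hPKeq, hQKeq⟩ := hKint φ hφ
    have hBddBelowB : BddBelow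
        (Set.range fun ν : ℝ => ν + ∫ x, legendre f ((∫ y, φ y ∂K x) - ν) ∂Q) := by
      refine ⟨∫ x, ∫ y, φ y ∂K x ∂Q, ?_⟩
      rintro z ⟨ν, rfl⟩
      exact hBlow φ hφ ν
    have hsInfle : sInf (Set.range fun ν : ℝ => ν + ∫ x, legendre f ((∫ y, φ y ∂K x) - ν) ∂Q)
        ≤ sInf (Set.range fun ν : ℝ => ν + ∫ x, legendre f (φ x - ν) ∂QK) := by
      refine le_csInf (Set.range_nonempty _) ?_
      rintro z ⟨ν, rfl⟩
      refine le_trans (csInf_le hBddBelowB ⟨ν, rfl⟩) ?_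
      exact (add_le_add_iff_left ν).mpr (key φ hφ ν).2
    have hst : dualObj f φ PK QK ≤ dualObj f (fun x => ∫ y, φ y ∂K x) P Q := by
      rw [dualObj, dualObj, hPKeq]
      exact sub_le_sub_left hsInfle _
    exact le_trans hst (le_csSup hbddT ⟨φ, hφ, rfl⟩)
  · -- the non-integrable case: the left-hand side is an unbounded sup, hence 0
    push_neg at HI
    obtain ⟨φ0, hφ0, ν0, hnon⟩ := HI
    have hφ0c : Continuous φ0 := gammaL_continuous hL.le hφ0
    have hφ0QK : Integrable φ0 QK := gammaL_integrable hL.le hφ0 QK hKQm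
    have hφ0PK : Integrable φ0 PK := gammaL_integrable hL.le hφ0 PK hKPm
    have hSun : ¬ BddAbove ((fun φ => dualObj f φ PK QK) '' GammaL (Euc m) L) := by
      rintro ⟨b, hb⟩
      set c : ℝ := b + 1 - ∫ x, φ0 x ∂PK with hcdef
      have hφc : (fun y => φ0 y + c) ∈ GammaL (Euc m) L := by
        intro x y
        simpa using hφ0 x y
      have hnon' : ∀ ν : ℝ, ν ≤ ν0 + c →
          ¬ Integrable (fun y : Euc m => legendre f (φ0 y + c - ν)) QK := by
        intro ν hν hInt
        apply hnon
        refine integrable_sandwich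
          ((hcont.comp (hφ0c.sub continuous_const)).measurable).aestronglyMeasurable
          (ae_of_all _ fun y => hidle (φ0 y - ν0))
          (ae_of_all _ fun y => hmono (by linarith : φ0 y - ν0 ≤ φ0 y + c - ν))
          (hφ0QK.sub (integrable_const ν0)) hInt
      have hsinf : sInf (Set.range fun ν : ℝ =>
          ν + ∫ x, legendre f ((fun y => φ0 y + c) x - ν) ∂QK) = 0 := by
        apply Real.sInf_of_not_bddBelow
        rintro ⟨l, hl⟩
        set ν₁ : ℝ := min (ν0 + c) (l - 1) with hν₁
        have h1 : l ≤ ν₁ + ∫ x, legendre f (φ0 x + c - ν₁) ∂QK := hl ⟨ν₁, rfl⟩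
        rw [integral_undef (hnon' ν₁ (min_le_left _ _))] at h1
        have h2 := min_le_right (ν0 + c) (l - 1)
        simp only [add_zero] at h1
        linarith
      have hval : dualObj f (fun y => φ0 y + c) PK QK = (∫ x, φ0 x ∂PK) + c := by
        rw [dualObj, hsinf, sub_zero, integral_add hφ0PK (integrable_const c),
          integral_const, probReal_univ, one_smul]
      have hmem : dualObj f (fun y => φ0 y + c) PK QK ≤ b :=
        hb ⟨(fun y => φ0 y + c), hφc, rfl⟩
      rw [hval] at hmem
      rw [hcdef] at hmem
      linarith
    rw [Dreg, Real.sSup_of_not_bddAbove hSun]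
    exact hT0le

end
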